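/- arXiv:math/0311494 — 10 statements merged into one kernel-verified Lean document; each statement's English description precedes it below -/
import Mathlib

section
/- The commutator word [g₁,g₂] is a weak identity of height 2 in a nonabelian free group F: for any homomorphism ρ : F × F → F, either ρ maps the commutator of the two generators of the first factor to the identity, or ρ maps the commutator of the two generators of the second factor to the identity. -/
/-!
The images of the two factors of `F × F` commute elementwise. If `ρ (x, 1) ≠ 1`, it commutes with
both `ρ (1, x)` and `ρ (1, y)`, so these commute with each other, because commutation is transitive
on the nontrivial elements of a free group: the centralizer of `a ≠ 1` is free (Nielsen–Schreier)
and has `a` in its centre, while a free group of rank at least two has trivial centre.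
-/

namespace FreeGroup

variable {α : Type*}

theorem toWord_mul_of_isReduced_append [DecidableEq α] {x y : FreeGroup α}
    (h : IsReduced (x.toWord ++ y.toWord)) : (x * y).toWord = x.toWord ++ y.toWord := by
  rw [toWord_mul, h.reduce_eq]

theorem eq_one_of_forall_commute {u v : α} (huv : u ≠ v) {z : FreeGroup α}
    (hz : ∀ g, Commute z g) : z = 1 := by
  classical
  rw [← toWord_eq_nil_iff]
  by_contra hne
  obtain ⟨p, hp⟩ : ∃ p, z.toWord.head? = some p := ⟨_, List.head?_eq_some_head hne⟩
  obtain ⟨q, hq⟩ : ∃ q, z.toWord.getLast? = some q := ⟨_, List.getLast?_eq_some_getLast hne⟩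
  -- The letter `(c, q.2)` with `c ≠ p.1` cancels neither with the first nor with the last letter
  -- of `z`, so it can be attached on either side, and then commuting forces it to be `p`.
  obtain ⟨c, hc⟩ : ∃ c, c ≠ p.1 := by
    by_cases hu : u = p.1
    exacts [⟨v, hu ▸ huv.symm⟩, ⟨u, hu⟩]
  set a : FreeGroup α := mk [(c, q.2)]
  have ha : a.toWord = [(c, q.2)] := by simp [a, toWord_mk]
  have hleft : (a * z).toWord = (c, q.2) :: z.toWord := by
    rw [toWord_mul_of_isReduced_append, ha, List.singleton_append]
    rw [IsReduced, ha, List.isChain_append]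
    refine ⟨List.isChain_singleton _, isReduced_toWord, ?_⟩
    simpa [hp] using fun h => absurd h hc
  have hright : (z * a).toWord = z.toWord ++ [(c, q.2)] := by
    rw [toWord_mul_of_isReduced_append, ha]
    rw [IsReduced, ha, List.isChain_append]
    refine ⟨isReduced_toWord, List.isChain_singleton _, ?_⟩
    simp [hq]
  have hhead := congrArg List.head? (hleft.symm.trans ((hz a).eq ▸ hright))
  rw [List.head?_cons, List.head?_append, hp, Option.some_or, Option.some_inj] at hhead
  exact hc (congrArg Prod.fst hhead)

theorem commute_of_subsingleton [Subsingleton α] (g h : FreeGroup α) : Commute g h := by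
  cases isEmpty_or_nonempty α with
  | inl => exact Subsingleton.elim g h ▸ Commute.refl g
  | inr hne =>
    obtain ⟨a⟩ := hne
    let := uniqueOfSubsingleton a
    let := IsCyclic.commGroup (α := FreeGroup α)
    exact mul_comm g h

end FreeGroup

namespace IsFreeGroup

variable {G : Type*} [Group G] [IsFreeGroup G]

theorem commute_of_forall_commute {z : G} (hz1 : z ≠ 1) (hz : ∀ g, Commute z g) (a b : G) :
    Commute a b := by
  let e := IsFreeGroup.toFreeGroup G
  by_cases h : ∃ u v : Generators G, u ≠ v
  · obtain ⟨u, v, huv⟩ := h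
    refine absurd (e.injective ?_) hz1
    rw [map_one]
    exact FreeGroup.eq_one_of_forall_commute huv fun g => e.apply_symm_apply g ▸ (hz _).map e
  · have : Subsingleton (Generators G) := ⟨by simpa using h⟩
    simpa using (FreeGroup.commute_of_subsingleton (e a) (e b)).map e.symm

theorem commute_trans {a b c : G} (ha : a ≠ 1) (hab : Commute a b) (hac : Commute a c) :
    Commute b c := by
  let H := Subgroup.centralizer ({a} : Set G)
  have mem_H {g : G} (hg : Commute a g) : g ∈ H :=
    Subgroup.mem_centralizer_singleton_iff.mpr hg.eq.symm
  have ha_central : ∀ g : H, Commute (⟨a, mem_H (Commute.refl a)⟩ : H) g := fun g =>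
    Subtype.ext (Subgroup.mem_centralizer_singleton_iff.mp g.2).symm
  have ha_ne_one : (⟨a, mem_H (Commute.refl a)⟩ : H) ≠ 1 := fun h => ha (congrArg Subtype.val h)
  exact (commute_of_forall_commute ha_ne_one ha_central ⟨b, mem_H hab⟩ ⟨c, mem_H hac⟩).map H.subtype

end IsFreeGroup

open scoped commutatorElement

theorem commutator_weak_identity_free_general {α : Type*} (x y : α)
    (ρ : FreeGroup α × FreeGroup α →* FreeGroup α) :
    ⁅ρ (FreeGroup.of x, 1), ρ (FreeGroup.of y, 1)⁆ = 1 ∨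
      ⁅ρ (1, FreeGroup.of x), ρ (1, FreeGroup.of y)⁆ = 1 := by
  have hcomm (g h : FreeGroup α) : Commute (ρ (g, 1)) (ρ (1, h)) :=
    (MonoidHom.commute_inl_inr g h).map ρ
  by_cases h1 : ρ (FreeGroup.of x, 1) = 1
  · left
    rw [h1, commutatorElement_one_left]
  · right
    rw [commutatorElement_eq_one_iff_commute]
    exact IsFreeGroup.commute_trans h1 (hcomm _ _) (hcomm _ _)

/-- The commutator word is a weak identity of height 2 in a nonabelian free group:
for any homomorphism ρ : F × F → F, where F is free on a set containing two distinct
generators x, y, either ρ kills the commutator of the generators of the first factor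
or that of the second factor. -/
theorem commutator_weak_identity_free {α : Type*} (x y : α) (hxy : x ≠ y)
    (ρ : FreeGroup α × FreeGroup α →* FreeGroup α) :
    ⁅ρ (FreeGroup.of x, 1), ρ (FreeGroup.of y, 1)⁆ = 1 ∨
      ⁅ρ (1, FreeGroup.of x), ρ (1, FreeGroup.of y)⁆ = 1 :=
  commutator_weak_identity_free_general x y ρ
end

section
/- If G is a finite group, then there do not exist N > log₂|G| pairs of elements (gᵢ, hᵢ) in G (1 ≤ i ≤ N) such that all gᵢ pairwise commute, all hᵢ pairwise commute, gᵢ commutes with hⱼ whenever i ≠ j, and gᵢ does not commute with hᵢ for every i. -/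
private lemma commute_cancel_left {G : Type*} [Group G] {a b c : G}
    (h1 : Commute a (b * c)) (h2 : Commute a c) : Commute a b := by
  have := h1.mul_right h2.inv_right
  simpa using this

private lemma commute_cancel_right {G : Type*} [Group G] {a b c : G}
    (h1 : Commute a (b * c)) (h2 : Commute a b) : Commute a c := by
  have := h2.inv_right.mul_right h1
  simpa [mul_assoc] using this

/-- In a finite group G there do not exist N pairs (gᵢ, hᵢ) with 2^N > |G| such that
the gᵢ pairwise commute, the hᵢ pairwise commute, gᵢ commutes with hⱼ for i ≠ j,
and gᵢ does not commute with hᵢ. -/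
theorem no_long_commuting_system_finite (G : Type*) [Group G] [Fintype G] (N : ℕ)
    (hN : Fintype.card G < 2 ^ N) :
    ¬ ∃ g h : Fin N → G,
        (∀ i j, Commute (g i) (g j)) ∧
        (∀ i j, Commute (h i) (h j)) ∧
        (∀ i j, i ≠ j → Commute (g i) (h j)) ∧
        (∀ i, ¬ Commute (g i) (h i)) := by
  rintro ⟨g, h, hg, hh, hgh, hbad⟩
  have cm : ∀ S : Finset (Fin N), Set.Pairwise ↑S fun a b => Commute (g a) (g b) :=
    fun S a _ b _ _ => hg a b
  set P : Finset (Fin N) → G := fun S => S.noncommProd g (cm S) with hP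
  -- For i ∉ S, h i commutes with the product over S
  have comm_notin : ∀ (S : Finset (Fin N)) (i : Fin N), i ∉ S →
      Commute (h i) (P S) := by
    intro S i hi
    exact Finset.noncommProd_commute _ _ _ _ fun j hj =>
      (hgh j i (fun e => hi (e ▸ hj))).symm
  -- For i ∈ S, h i does not commute with the product over S
  have comm_in : ∀ (S : Finset (Fin N)) (i : Fin N), i ∈ S →
      ¬ Commute (h i) (P S) := by
    intro S
    induction S using Finset.induction_on with
    | empty => simp
    | @insert a s ha ih =>
      intro i hi hc
      rw [hP] at hc
      simp only [Finset.noncommProd_insert_of_notMem s a g (cm _) ha] at hc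
      rcases Finset.mem_insert.mp hi with rfl | hi
      · have hp : Commute (h i) (P s) := comm_notin s i ha
        exact hbad i (commute_cancel_left hc hp).symm
      · have hga : Commute (h i) (g a) := (hgh a i (fun e => ha (e ▸ hi))).symm
        exact ih i hi (commute_cancel_right hc hga)
  -- The map S ↦ ∏ S g is injective
  have inj : Function.Injective P := by
    intro S T hST
    ext i
    constructor
    · intro hiS
      by_contra hiT
      exact comm_in S i hiS (hST ▸ comm_notin T i hiT)
    · intro hiT
      by_contra hiS
      exact comm_in T i hiT (hST ▸ comm_notin S i hiS)
  have := Fintype.card_le_of_injective _ inj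
  simp [Fintype.card_finset] at this
  omega
end

section
/- If G ≤ GLₙ(K) is a linear group over a field K, then there do not exist N > n² pairs (gᵢ,hᵢ) of elements of G such that all gᵢ pairwise commute, gᵢ commutes with hⱼ for i ≠ j, and gᵢ does not commute with hᵢ for every i. -/
open Module

/-- For a linear group G ≤ GLₙ(K), there do not exist N > n² pairs (gᵢ,hᵢ) in G such
that the gᵢ pairwise commute, gᵢ commutes with hⱼ for i ≠ j, and gᵢ does not
commute with hᵢ. -/
theorem no_long_commuting_system_linear (K : Type*) [Field K] (n N : ℕ)
    (hN : n ^ 2 < N) (G : Subgroup (GL (Fin n) K)) :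
    ¬ ∃ g h : Fin N → G,
        (∀ i j, Commute (g i) (g j)) ∧
        (∀ i j, i ≠ j → Commute (g i) (h j)) ∧
        (∀ i, ¬ Commute (g i) (h i)) := by
  rintro ⟨g, h, hgg, hgh, hbad⟩
  set Mat := Matrix (Fin n) (Fin n) K
  set M : Fin N → Mat := fun i => ((g i : GL (Fin n) K) : Mat) with hM
  set H : Fin N → Mat := fun i => ((h i : GL (Fin n) K) : Mat) with hH
  have hcomm : ∀ i j : Fin N, i ≠ j → M i * H j = H j * M i := by
    intro i j hij
    have := congrArg (fun x : G => ((x : GL (Fin n) K) : Mat)) (hgh i j hij)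
    simpa [hM, hH] using this
  have hncomm : ∀ i : Fin N, M i * H i ≠ H i * M i := by
    intro i heq
    apply hbad i
    apply Subtype.ext
    apply Units.ext
    simpa [hM, hH] using heq
  -- centralizer submodules
  let C : Mat → Submodule K Mat := fun A =>
    LinearMap.ker (LinearMap.mulLeft K A - LinearMap.mulRight K A)
  have memC : ∀ (A x : Mat), x ∈ C A ↔ A * x = x * A := by
    intro A x
    simp [C, LinearMap.mem_ker, sub_eq_zero]
  let W : ℕ → Submodule K Mat := fun k => ⨅ j : Fin N, ⨅ _ : (j : ℕ) < k, C (M j)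
  have memW : ∀ (k : ℕ) (x : Mat), x ∈ W k ↔ ∀ j : Fin N, (j : ℕ) < k → M j * x = x * M j := by
    intro k x
    simp [W, Submodule.mem_iInf, memC]
  have hlt : ∀ k : ℕ, k < N → W (k + 1) < W k := by
    intro k hk
    have hWle : W (k + 1) ≤ W k := by
      intro x hx
      rw [memW] at hx ⊢
      exact fun j hj => hx j (Nat.lt_succ_of_lt hj)
    refine lt_of_le_of_ne hWle ?_
    intro hEq
    have hmem : H ⟨k, hk⟩ ∈ W k := by
      rw [memW]
      intro j hj
      exact hcomm j ⟨k, hk⟩ (by intro hjk; rw [hjk] at hj; exact lt_irrefl _ hj)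
    rw [← hEq, memW] at hmem
    exact hncomm ⟨k, hk⟩ (hmem ⟨k, hk⟩ (Nat.lt_succ_self k))
  have key : ∀ k : ℕ, k ≤ N → k + finrank K (W k) ≤ finrank K (W 0) := by
    intro k
    induction k with
    | zero => intro _; simp
    | succ k ih =>
      intro hk
      have h1 : finrank K (W (k + 1)) < finrank K (W k) :=
        Submodule.finrank_lt_finrank_of_lt (hlt k hk)
      have := ih (Nat.le_of_succ_le hk)
      omega
  have hW0 : finrank K (W 0) ≤ n ^ 2 := by
    have h1 : finrank K (W 0) ≤ finrank K Mat := Submodule.finrank_le _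
    have h2 : finrank K Mat = n ^ 2 := by
      simp [Mat, Module.finrank_matrix, sq]
    omega
  have := key N (le_refl N)
  omega
end

section
/- If G is a group in which every strictly increasing chain of sets of pairwise commuting elements yields a non-strictly-decreasing chain of centralizers beyond length N (bounded centralizer sequences), then there do not exist N pairs (gᵢ,hᵢ) in G with all gᵢ pairwise commuting, gᵢ commuting with hⱼ for i ≠ j, and gᵢ not commuting with hᵢ for every i. -/
/-- If G has bounded centralizer sequences with bound N (every increasing chain of N
sets of pairwise commuting elements has a non-strictly-decreasing chain of
centralizers), then there do not exist N pairs (gᵢ,hᵢ) with the gᵢ pairwise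
commuting, gᵢ commuting with hⱼ for i ≠ j, and gᵢ not commuting with hᵢ. -/
theorem bcs_implies_no_commuting_system (G : Type*) [Group G] (N : ℕ)
    (hbcs : ∀ P : Fin N → Set G,
      (∀ i j : Fin N, i ≤ j → P i ⊆ P j) →
      (∀ i : Fin N, ∀ x ∈ P i, ∀ y ∈ P i, Commute x y) →
      ∃ i j : Fin N, i < j ∧ Set.centralizer (P i) ⊆ Set.centralizer (P j)) :
    ¬ ∃ g h : Fin N → G,
        (∀ i j, Commute (g i) (g j)) ∧
        (∀ i j, i ≠ j → Commute (g i) (h j)) ∧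
        (∀ i, ¬ Commute (g i) (h i)) := by
  rintro ⟨g, h, hgg, hgh, hnot⟩
  set P : Fin N → Set G := fun i => {x | ∃ k, k ≤ i ∧ x = g k} with hP
  obtain ⟨i, j, hij, hsub⟩ := hbcs P
    (by
      rintro i j hij x ⟨k, hk, rfl⟩
      exact ⟨k, le_trans hk hij, rfl⟩)
    (by
      rintro i x ⟨k, _, rfl⟩ y ⟨l, _, rfl⟩
      exact hgg k l)
  have hhj : h j ∈ Set.centralizer (P i) := by
    rintro x ⟨k, hk, rfl⟩
    have : k ≠ j := fun e => absurd (e ▸ hk) (not_le.mpr (e ▸ hij))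
    exact (hgh k j this).eq
  exact hnot j (hsub hhj (g j) ⟨j, le_refl j, rfl⟩)
end

section
/- Let G be a group that discriminates G × G (i.e., G is discriminating). Then for every n ≥ 1 and every finite list of elements h₁,…,h_N ∈ G^n, there exists a homomorphism ρ : G^n → G such that ρ(hᵢ) = 1 if and only if hᵢ = 1, for every i. -/
/-- A group G is discriminating if for every finite list of elements of G × G there is
a homomorphism G × G → G killing exactly the trivial ones. -/
def IsDiscriminating (G : Type*) [Group G] : Prop :=
  ∀ (N : ℕ) (h : Fin N → G × G),
    ∃ ρ : G × G →* G, ∀ i, ρ (h i) = 1 ↔ h i = 1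

/-- The tail homomorphism `G^(n+1) → G^n`. -/
def tailHom (G : Type*) [Group G] (n : ℕ) : (Fin (n + 1) → G) →* (Fin n → G) where
  toFun f := f ∘ Fin.succ
  map_one' := rfl
  map_mul' _ _ := rfl

lemma fin_succ_eq_one_iff {G : Type*} [Group G] {n : ℕ} (f : Fin (n + 1) → G) :
    f = 1 ↔ f 0 = 1 ∧ (f ∘ Fin.succ : Fin n → G) = 1 := by
  constructor
  · rintro rfl; exact ⟨rfl, rfl⟩
  · rintro ⟨h0, hs⟩
    funext i
    refine Fin.cases h0 (fun j => ?_) i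
    exact congrFun hs j

/-- If G is discriminating, then for every n ≥ 1 and every finite list of elements of
G^n there exists a homomorphism G^n → G killing exactly the trivial ones. -/
theorem discriminating_powers (G : Type*) [Group G] (hG : IsDiscriminating G)
    (n : ℕ) (hn : 1 ≤ n) (N : ℕ) (h : Fin N → (Fin n → G)) :
    ∃ ρ : (Fin n → G) →* G, ∀ i, ρ (h i) = 1 ↔ h i = 1 := by
  induction n, hn using Nat.le_induction with
  | base =>
    refine ⟨Pi.evalMonoidHom (fun _ => G) 0, fun i => ?_⟩
    simp only [Pi.evalMonoidHom_apply]
    constructor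
    · intro h0
      funext j
      have : j = 0 := Subsingleton.elim _ _
      rw [this]; exact h0
    · intro hh; rw [hh]; rfl
  | succ n hn IH =>
    obtain ⟨σ, hσ⟩ := IH (fun i => (h i) ∘ Fin.succ)
    obtain ⟨τ, hτ⟩ := hG N (fun i => (h i 0, σ ((h i) ∘ Fin.succ)))
    refine ⟨τ.comp (((Pi.evalMonoidHom (fun _ => G) 0).prod (σ.comp (tailHom G n)))), fun i => ?_⟩
    have : (τ.comp (((Pi.evalMonoidHom (fun _ => G) 0).prod (σ.comp (tailHom G n))))) (h i)
        = τ (h i 0, σ ((h i) ∘ Fin.succ)) := rfl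
    rw [this, hτ i, Prod.mk_eq_one, hσ i, ← fin_succ_eq_one_iff]
end

section
/- Let G be a discriminating group and w an element of the free group F on countably many generators. If w is a weak identity in G (of any height N), then w is an identity in G (i.e., every homomorphism F → G kills w). -/
/-! Splitting `Gⁿ⁺¹ = G × Gⁿ`, discrimination of `G × G` by maps to `G` iterates to `Gᴺ`.
So some `ρ : Gᴺ → G` kills the tuple with `π w` in one coordinate and `1` elsewhere only if
`π w = 1`; as `w` is a weak identity, `ρ ∘ πᴺ` kills one of these tuples. -/

def headTailHom {G : Type*} [Group G] {n : ℕ} (σ : G × G →* G) (ρ : (Fin n → G) →* G) :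
    (Fin (n + 1) → G) →* G :=
  σ.comp ((Pi.evalMonoidHom _ 0).prod (ρ.comp (MonoidHom.pi fun i => Pi.evalMonoidHom _ i.succ)))

theorem headTailHom_apply {G : Type*} [Group G] {n : ℕ} (σ : G × G →* G)
    (ρ : (Fin n → G) →* G) (x : Fin (n + 1) → G) :
    headTailHom σ ρ x = σ (x 0, ρ (Fin.tail x)) :=
  rfl

theorem IsDiscriminating.exists_pi_hom {G : Type*} [Group G] (hG : IsDiscriminating G)
    (n : ℕ) {M : ℕ} (h : Fin M → Fin n → G) :
    ∃ ρ : (Fin n → G) →* G, ∀ i, ρ (h i) = 1 ↔ h i = 1 := by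
  induction n with
  | zero => exact ⟨1, fun i => by simp [Subsingleton.elim (h i) 1]⟩
  | succ n ih =>
    obtain ⟨ρ, hρ⟩ := ih fun i => Fin.tail (h i)
    obtain ⟨σ, hσ⟩ := hG M fun i => (h i 0, ρ (Fin.tail (h i)))
    refine ⟨headTailHom σ ρ, fun i => ?_⟩
    rw [headTailHom_apply, hσ i, Prod.mk_eq_one, hρ i]
    simp only [funext_iff, Fin.forall_fin_succ, Fin.tail, Pi.one_apply]

theorem weak_identity_is_identity_of_discriminating_general (G : Type*) [Group G]
    (hG : IsDiscriminating G) (w : FreeGroup ℕ) (N : ℕ)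
    (hw : ∀ ρ : (Fin N → FreeGroup ℕ) →* G, ∃ k : Fin N,
      ρ (MonoidHom.mulSingle (fun _ : Fin N => FreeGroup ℕ) k w) = 1) :
    ∀ π : FreeGroup ℕ →* G, π w = 1 := by
  intro π
  obtain ⟨ρ, hρ⟩ := hG.exists_pi_hom N fun k => Pi.mulSingle k (π w)
  obtain ⟨k, hk⟩ := hw (ρ.comp (π.compLeft (Fin N)))
  have hsingle : π.compLeft (Fin N) (Pi.mulSingle k w) = Pi.mulSingle k (π w) := by
    ext j
    exact Pi.apply_mulSingle (fun _ => π) (fun _ => map_one π) k w j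
  rw [MonoidHom.mulSingle_apply, MonoidHom.comp_apply, hsingle, hρ k] at hk
  exact Pi.mulSingle_eq_one_iff.mp hk

/-- In a discriminating group, every weak identity (of any positive height N) is an
identity: every homomorphism from the free group F on countably many generators
kills it. -/
theorem weak_identity_is_identity_of_discriminating (G : Type*) [Group G]
    (hG : IsDiscriminating G) (w : FreeGroup ℕ) (N : ℕ) (hN : 0 < N)
    (hw : ∀ ρ : (Fin N → FreeGroup ℕ) →* G, ∃ k : Fin N,
      ρ (MonoidHom.mulSingle (fun _ : Fin N => FreeGroup ℕ) k w) = 1) :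
    ∀ π : FreeGroup ℕ →* G, π w = 1 :=
  weak_identity_is_identity_of_discriminating_general G hG w N hw
end

section
/- A finitely generated abelian group is discriminating if and only if it is torsion-free (equivalently, isomorphic to ℤⁿ for some n). -/
/-- The old Mathlib `Monoid.IsTorsionFree` (removed): every non-identity element has infinite order. -/
def Monoid.IsTorsionFree (G : Type*) [Monoid G] : Prop :=
  ∀ g : G, g ≠ 1 → ¬IsOfFinOrder g

/-!
If `G` has torsion, its torsion subgroup `T` is finite and nontrivial. A homomorphism
`G × G → G` discriminating all elements of `torsion (G × G) = T × T` is injective there and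
takes values in `T`, which is impossible as `|T|² > |T|`.

Conversely, if `G` is torsion-free then `G × G` is a free `ℤ`-module of finite rank, and some
linear functional `φ : G × G → ℤ` is nonzero at each of the finitely many nontrivial `hᵢ`:
given `φ` that works for all but one vector `v`, and `ψ` with `ψ v ≠ 0`, the functional
`φ + c • ψ` vanishes at any given vector for at most one `c ∈ ℤ`, unless both `φ` and `ψ` do.
Then `x ↦ g ^ φ x` works for any `g ≠ 1`, since `g` has infinite order.
-/

open CommGroup

theorem Set.subsingleton_setOf_add_mul_eq_zero {R : Type*} [Ring R] [NoZeroDivisors R]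
    {a b : R} (hab : a ≠ 0 ∨ b ≠ 0) : {c : R | a + c * b = 0}.Subsingleton := by
  intro c (hc : a + c * b = 0) c' (hc' : a + c' * b = 0)
  have hb : b ≠ 0 := by
    rintro rfl
    simp_all
  exact mul_right_cancel₀ hb (add_left_cancel (hc.trans hc'.symm))

theorem Module.exists_dual_forall_ne_zero_of_infinite (R : Type*) {M : Type*} [CommRing R]
    [IsDomain R] [Infinite R] [AddCommGroup M] [Module R M] [Module.Projective R M]
    (s : Finset M) (hs : 0 ∉ s) : ∃ f : Module.Dual R M, ∀ v ∈ s, f v ≠ 0 := by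
  classical
  induction s using Finset.induction_on with
  | empty => exact ⟨0, by simp⟩
  | insert v s _ ih =>
    obtain ⟨hv, hs⟩ : v ≠ 0 ∧ 0 ∉ s := by simpa [eq_comm] using hs
    obtain ⟨f, hf⟩ := ih hs
    obtain ⟨g, hg⟩ := Module.Projective.exists_dual_ne_zero R hv
    have hbad : (⋃ w ∈ insert v s, {c : R | f w + c * g w = 0}).Finite := by
      refine (insert v s).finite_toSet.biUnion fun w hw => ?_
      refine (Set.subsingleton_setOf_add_mul_eq_zero ?_).finite
      rcases Finset.mem_insert.mp hw with rfl | hw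
      exacts [Or.inr hg, Or.inl (hf w hw)]
    obtain ⟨c, hc⟩ := hbad.exists_notMem
    refine ⟨f + c • g, fun w hw hzero => hc (Set.mem_biUnion hw ?_)⟩
    simpa using hzero

theorem Monoid.isTorsionFree_iff_isMulTorsionFree {G : Type*} [CommGroup G] :
    Monoid.IsTorsionFree G ↔ IsMulTorsionFree G :=
  isMulTorsionFree_iff_not_isOfFinOrder.symm

theorem CommGroup.finite_torsion (G : Type*) [CommGroup G] [Group.FG G] :
    Finite (torsion G) := by
  have : Module.Finite ℤ (Additive G) := Module.Finite.iff_addGroup_fg.mpr inferInstance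
  have hfg : (AddSubgroup.toIntSubmodule (torsion G).toAddSubgroup).FG :=
    IsNoetherian.noetherian _
  rw [Submodule.fg_iff_addSubgroup_fg, AddSubgroup.toIntSubmodule_toAddSubgroup,
    ← Subgroup.fg_iff_add_fg, ← Group.fg_iff_subgroup_fg] at hfg
  exact finite_of_fg_isMulTorsion _ fun x => Submonoid.isOfFinOrder_coe.mp x.2

namespace IsDiscriminating

variable {G : Type*}

theorem exists_injective_comp_subtype [Group G] (hG : IsDiscriminating G)
    (H : Subgroup (G × G)) [Finite H] :
    ∃ ρ : G × G →* G, Function.Injective (ρ.comp H.subtype) := by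
  obtain ⟨N, ⟨e⟩⟩ := Finite.exists_equiv_fin H
  obtain ⟨ρ, hρ⟩ := hG N fun i => e.symm i
  refine ⟨ρ, (injective_iff_map_eq_one _).mpr fun x hx => Subtype.ext ?_⟩
  simpa using (hρ (e x)).mp (by simpa using hx)

theorem torsion_eq_bot [CommGroup G] [Finite (torsion G)] (hG : IsDiscriminating G) :
    torsion G = ⊥ := by
  set T := torsion G
  have hprod : torsion (G × G) = T.prod T := torsion_prod
  have : Finite (torsion (G × G)) := hprod ▸ Finite.of_equiv _ (T.prodEquiv T).symm.toEquiv
  obtain ⟨ρ, hρ⟩ := hG.exists_injective_comp_subtype (torsion (G × G))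
  have hmaps (x : torsion (G × G)) : ρ x ∈ T := ρ.isOfFinOrder x.2
  have hle : Nat.card T * Nat.card T ≤ Nat.card T := by
    rw [← Nat.card_prod, ← Nat.card_congr (T.prodEquiv T).toEquiv, ← hprod]
    exact Nat.card_le_card_of_injective (fun x => ⟨ρ x, hmaps x⟩)
      fun x y hxy => hρ (congrArg Subtype.val hxy)
  exact T.eq_bot_of_card_le (Nat.le_of_mul_le_mul_left (by rwa [mul_one]) Nat.card_pos)

theorem of_isMulTorsionFree [CommGroup G] [Group.FG G] [IsMulTorsionFree G] :
    IsDiscriminating G := by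
  classical
  intro N h
  rcases subsingleton_or_nontrivial G with hG | hG
  · exact ⟨1, fun i => by simp [Subsingleton.elim (h i) 1]⟩
  obtain ⟨g, hg⟩ := exists_ne (1 : G)
  have : Module.Finite ℤ (Additive (G × G)) := Module.Finite.iff_addGroup_fg.mpr inferInstance
  obtain ⟨φ, hφ⟩ := Module.exists_dual_forall_ne_zero_of_infinite ℤ
    ((Finset.univ.image fun i => Additive.ofMul (h i)).erase 0) (Finset.notMem_erase 0 _)
  let ρ : G × G →* G :=
    MonoidHom.toAdditive.symm ((zmultiplesHom _ (Additive.ofMul g)).comp φ.toAddMonoidHom)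
  have hρ (x : G × G) : ρ x = 1 ↔ φ (Additive.ofMul x) = 0 :=
    (injective_zpow_iff_not_isOfFinOrder.mpr (not_isOfFinOrder_of_isMulTorsionFree hg)).eq_iff'
      (zpow_zero g)
  refine ⟨ρ, fun i => ?_⟩
  rw [hρ]
  refine ⟨fun hi => ?_, fun hi => by simp [hi]⟩
  by_contra hne
  exact hφ _ (by simpa using hne) hi

end IsDiscriminating

/-- A finitely generated abelian group is discriminating iff it is torsion-free. -/
theorem fg_abelian_discriminating_iff_torsion_free (G : Type*) [CommGroup G]
    [Group.FG G] : IsDiscriminating G ↔ Monoid.IsTorsionFree G := by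
  have := CommGroup.finite_torsion G
  rw [Monoid.isTorsionFree_iff_isMulTorsionFree]
  exact ⟨fun hG => isMulTorsionFree_iff_torsion_eq_bot.mpr hG.torsion_eq_bot,
    fun _ => IsDiscriminating.of_isMulTorsionFree⟩
end

section
/- A nonabelian finite simple group is not discriminating; more concretely, if G is a finite nonabelian group, then G does not discriminate G × G: there exist elements h₁,…,h_N ∈ G × G such that no homomorphism ρ : G × G → G satisfies ρ(hᵢ) = 1 iff hᵢ = 1 for all i. -/
/-- A finite nonabelian group G does not discriminate G × G: there is a finite list of
elements of G × G such that no homomorphism G × G → G kills exactly the trivial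
ones among them. -/
theorem finite_nonabelian_not_discriminating (G : Type*) [Group G] [Fintype G]
    (hna : ¬ ∀ a b : G, a * b = b * a) :
    ∃ (N : ℕ) (h : Fin N → G × G),
      ∀ ρ : G × G →* G, ∃ i, ¬ (ρ (h i) = 1 ↔ h i = 1) := by
  classical
  refine ⟨Fintype.card (G × G), (Fintype.equivFin (G × G)).symm, ?_⟩
  intro ρ
  by_contra hcon
  push_neg at hcon
  have hker : ∀ x : G × G, ρ x = 1 ↔ x = 1 := by
    intro x
    have := hcon (Fintype.equivFin (G × G) x)
    simpa using this
  have hinj : Function.Injective ρ := by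
    rw [injective_iff_map_eq_one]
    intro a ha
    exact (hker a).mp ha
  have hcard : Fintype.card (G × G) ≤ Fintype.card G :=
    Fintype.card_le_of_injective ρ hinj
  rw [Fintype.card_prod] at hcard
  have h2 : 2 ≤ Fintype.card G := by
    rw [show (2:ℕ) = 1 + 1 from rfl, Nat.succ_le_iff, Fintype.one_lt_card_iff]
    push_neg at hna
    obtain ⟨a, b, hab⟩ := hna
    exact ⟨a, 1, fun h => hab (by simp [h])⟩
  nlinarith
end

section
/- Let G be a finitely generated metabelian group generated by d elements. Then there exists an integer N ≥ 1 such that for every g ∈ G and h ∈ [G,G], if [h, g^N] ≠ 1 then [h, g^k] ≠ 1 for all nonzero integers k. -/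
/-!
Conjugation makes `G'` a module over the Noetherian ring `ℤ[Gᵃᵇ]`, finitely generated by the
commutators of the generators of `G`, and `h ∈ G'` commutes with `g ^ k` exactly when `gᵏ` fixes
`h` in this module. So it suffices that for a finitely generated module `A` over a commutative
Noetherian ring `P` and a homomorphism `φ` from a finitely generated abelian group `Q` to `P`, the
finite orbits of all the cyclic actions of the `φ q` have lengths dividing a single `N`. Along a
prime filtration of `A` this reduces to extensions and to the modules `P ⧸ 𝔭`, `𝔭` prime. In
`P ⧸ 𝔭` a nonzero periodic point forces `φ q` to have finite order modulo `𝔭`, and these orders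
are bounded because the image of `Q` is a finitely generated abelian group. An extension costs a
factor: the exponent of the `ℤ`-torsion of the submodule, finite since that torsion is a finitely
generated submodule.
-/

open scoped commutatorElement

theorem IsNoetherian.exists_nsmul_eq_zero_of_isOfFinAddOrder (P A : Type*) [Semiring P]
    [AddCommMonoid A] [Module P A] [IsNoetherian P A] :
    ∃ e : ℕ, 0 < e ∧ ∀ x : A, IsOfFinAddOrder x → e • x = 0 := by
  let T : Submodule P A :=
    { carrier := {x | IsOfFinAddOrder x}
      add_mem' := IsOfFinAddOrder.add
      zero_mem' := IsOfFinAddOrder.zero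
      smul_mem' := fun c _ hx => (DistribSMul.toAddMonoidHom A c).isOfFinAddOrder hx }
  obtain ⟨F, hF⟩ := IsNoetherian.noetherian T
  refine ⟨∏ x ∈ F, addOrderOf x, Finset.prod_pos fun x hx => ?_, fun x hx => ?_⟩
  · exact IsOfFinAddOrder.addOrderOf_pos (hF ▸ Submodule.subset_span hx : x ∈ T)
  · have hT : T ≤ LinearMap.ker ((∏ x ∈ F, addOrderOf x) • LinearMap.id : A →ₗ[P] A) := by
      rw [← hF, Submodule.span_le]
      intro y hy
      simpa [← addOrderOf_dvd_iff_nsmul_eq_zero] using Finset.dvd_prod_of_mem _ hy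
    simpa using hT (show x ∈ T from hx)

theorem MonoidHom.exists_pow_eq_one_of_isOfFinOrder {Q M : Type*} [CommGroup Q] [Group.FG Q]
    [Monoid M] (ψ : Q →* M) : ∃ e : ℕ, 0 < e ∧ ∀ q, IsOfFinOrder (ψ q) → ψ q ^ e = 1 := by
  obtain ⟨e, he, hkill⟩ := IsNoetherian.exists_nsmul_eq_zero_of_isOfFinAddOrder ℤ
    (Additive (Q ⧸ ψ.ker))
  refine ⟨e, he, fun q hq => ?_⟩
  obtain ⟨n, hn, hqn⟩ := isOfFinOrder_iff_pow_eq_one.1 hq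
  have hfin : IsOfFinOrder (q : Q ⧸ ψ.ker) := isOfFinOrder_iff_pow_eq_one.2 ⟨n, hn, by
    rw [← QuotientGroup.mk_pow, QuotientGroup.eq_one_iff, MonoidHom.mem_ker, map_pow, hqn]⟩
  have := hkill _ (isOfFinAddOrder_ofMul_iff.2 hfin)
  rwa [← ofMul_pow, ofMul_eq_zero, ← QuotientGroup.mk_pow, QuotientGroup.eq_one_iff,
    MonoidHom.mem_ker, map_pow] at this

theorem pow_smul_eq_add_nsmul {P B : Type*} [Semiring P] [AddCommGroup B] [Module P B]
    {v : P} {m : B} (hv : v • (v • m - m) = v • m - m) (j : ℕ) :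
    v ^ j • m = m + j • (v • m - m) := by
  induction j with
  | zero => simp
  | succ j ih => rw [pow_succ', mul_smul, ih, smul_add, smul_comm v j, hv, succ_nsmul]; abel

def PeriodsDvd {Q P : Type*} [Monoid Q] [Semiring P] (φ : Q →* P) (A : Type*)
    [AddCommMonoid A] [Module P A] (N : ℕ) : Prop :=
  ∀ q (m : A) (k : ℕ), 0 < k → φ q ^ k • m = m → φ q ^ N • m = m

namespace PeriodsDvd

section Semiring

variable {Q P : Type*} [Monoid Q] [Semiring P] {φ : Q →* P} {A B : Type*}
  [AddCommMonoid A] [Module P A] [AddCommMonoid B] [Module P B] {N : ℕ}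

theorem of_subsingleton [Subsingleton A] (N : ℕ) : PeriodsDvd φ A N :=
  fun _ _ _ _ _ => Subsingleton.elim _ _

theorem mul_right (h : PeriodsDvd φ A N) (t : ℕ) : PeriodsDvd φ A (N * t) :=
  fun q m k hk hm => MulAction.pow_smul_eq_iff_period_dvd.2 <|
    (MulAction.pow_smul_eq_iff_period_dvd.1 (h q m k hk hm)).mul_right t

theorem of_injective (f : A →ₗ[P] B) (hf : Function.Injective f) (hB : PeriodsDvd φ B N) :
    PeriodsDvd φ A N := fun q m k hk hm =>
  hf <| by rw [map_smul, hB q (f m) k hk (by rw [← map_smul, hm])]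

end Semiring

section Ring

variable {Q P : Type*} [Monoid Q] [Ring P] {φ : Q →* P} {A B C : Type*}
  [AddCommGroup A] [Module P A] [AddCommGroup B] [Module P B] [AddCommGroup C] [Module P C]
  {N : ℕ}

/-- If `c ^ k` fixes `m`, then `c ^ N` fixes `m` modulo `A`, and the displacement
`x = c ^ N • m - m ∈ A` is fixed by `c ^ N`; hence `(c ^ N) ^ j • m = m + j • x`, and `j = k`
shows that `x` is torsion, so it is killed by the torsion exponent `E` of `A`. -/
theorem of_exact (f : A →ₗ[P] B) (g : B →ₗ[P] C) (hf : Function.Injective f)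
    (hfg : Function.Exact f g) {E : ℕ} (hE : ∀ y : A, IsOfFinAddOrder y → E • y = 0)
    (hA : PeriodsDvd φ A N) (hC : PeriodsDvd φ C N) : PeriodsDvd φ B (N * E) := by
  intro q m k hk hm
  set c := φ q
  obtain ⟨y, hy⟩ : ∃ y, f y = c ^ N • m - m := (hfg _).1 <| by
    rw [map_sub, map_smul, hC q (g m) k hk (by rw [← map_smul, hm]), sub_self]
  have hyk : c ^ k • y = y := hf <| by
    rw [map_smul, hy, smul_sub, smul_smul, ← pow_add, add_comm, pow_add, mul_smul, hm]
  have hyN : c ^ N • (c ^ N • m - m) = c ^ N • m - m := by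
    rw [← hy, ← map_smul, hA q y k hk hyk]
  have hNk : (c ^ N) ^ k • m = m := by
    rw [← pow_mul, MulAction.pow_smul_eq_iff_period_dvd]
    exact (MulAction.pow_smul_eq_iff_period_dvd.1 hm).mul_left N
  have hky : k • y = 0 := hf <| by
    rw [map_nsmul, hy, map_zero, ← left_eq_add, ← pow_smul_eq_add_nsmul hyN k, hNk]
  have hEy : E • y = 0 := hE y (isOfFinAddOrder_iff_nsmul_eq_zero.2 ⟨k, hk, hky⟩)
  rw [pow_mul, pow_smul_eq_add_nsmul hyN E, ← hy, ← map_nsmul, hEy, map_zero, add_zero]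

end Ring

variable {Q P : Type*} [CommGroup Q] [Group.FG Q] [CommRing P] (φ : Q →* P)

theorem exists_quotient_of_isPrime (𝔭 : Ideal P) [𝔭.IsPrime] :
    ∃ e : ℕ, 0 < e ∧ PeriodsDvd φ (P ⧸ 𝔭) e := by
  obtain ⟨e, he, hψ⟩ :=
    ((Ideal.Quotient.mk 𝔭 : P →* P ⧸ 𝔭).comp φ).exists_pow_eq_one_of_isOfFinOrder
  refine ⟨e, he, fun q m k hk hm => ?_⟩
  simp only [Algebra.smul_def, Ideal.Quotient.algebraMap_eq, map_pow] at hm ⊢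
  rcases eq_or_ne m 0 with rfl | hm0
  · rw [mul_zero]
  · have hqk : Ideal.Quotient.mk 𝔭 (φ q) ^ k = 1 :=
      mul_right_cancel₀ hm0 (hm.trans (one_mul m).symm)
    have hqe : Ideal.Quotient.mk 𝔭 (φ q) ^ e = 1 :=
      hψ q (isOfFinOrder_iff_pow_eq_one.2 ⟨k, hk, hqk⟩)
    rw [hqe, one_mul]

theorem exists_of_finite [IsNoetherianRing P] (A : Type*) [AddCommGroup A] [Module P A]
    [Module.Finite P A] : ∃ N : ℕ, 0 < N ∧ PeriodsDvd φ A N := by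
  induction ‹Module.Finite P A› using
    IsNoetherianRing.induction_on_isQuotientEquivQuotientPrime with
  | subsingleton A => exact ⟨1, one_pos, of_subsingleton 1⟩
  | quotient A 𝔭 e =>
    obtain ⟨N, hN, h⟩ := exists_quotient_of_isPrime φ 𝔭.asIdeal
    exact ⟨N, hN, h.of_injective e.toLinearMap e.injective⟩
  | exact A B C f g hf _ hfg hA hC =>
    obtain ⟨N₁, hN₁, hA⟩ := hA
    obtain ⟨N₃, hN₃, hC⟩ := hC
    obtain ⟨E, hE, hEA⟩ := IsNoetherian.exists_nsmul_eq_zero_of_isOfFinAddOrder P A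
    refine ⟨N₁ * N₃ * E, by positivity, of_exact f g hf hfg hEA (hA.mul_right N₃) ?_⟩
    simpa only [mul_comm N₁] using hC.mul_right N₁

end PeriodsDvd

theorem commutator_le_of_commutatorElement_mem {G : Type*} [Group G] {S : Set G}
    (hS : Subgroup.closure S = ⊤) {W : Subgroup G} [W.Normal]
    (hW : ∀ s ∈ S, ∀ t ∈ S, ⁅s, t⁆ ∈ W) : commutator G ≤ W := by
  rw [← Subgroup.Normal.quotient_commutative_iff_commutator_le]
  have htop : Subgroup.closure (QuotientGroup.mk' W '' S) = ⊤ := by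
    rw [← MonoidHom.map_closure, hS, ← MonoidHom.range_eq_map, MonoidHom.range_eq_top]
    exact QuotientGroup.mk'_surjective W
  have hcomm := Subgroup.isMulCommutative_closure (k := QuotientGroup.mk' W '' S) <| by
    rintro _ ⟨s, hs, rfl⟩ _ ⟨t, ht, rfl⟩
    rw [← commutatorElement_eq_one_iff_mul_comm, ← map_commutatorElement, QuotientGroup.mk'_apply,
      QuotientGroup.eq_one_iff]
    exact hW s hs t ht
  rw [htop] at hcomm
  exact ⟨⟨fun a b => congrArg Subtype.val (hcomm.is_comm.comm ⟨a, trivial⟩ ⟨b, trivial⟩)⟩⟩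

section Metabelian

variable (G : Type*) [Group G] [IsMulCommutative (commutator G)]

open scoped IsMulCommutative

def Abelianization.conjCommutator : Abelianization G →* MulAut (commutator G) :=
  QuotientGroup.lift _ MulAut.conjNormal fun n hn => MulEquiv.ext fun h => Subtype.ext <| by
    rw [MulAut.conjNormal_apply, setLike_mul_comm hn h.2, mul_inv_cancel_right]
    rfl

instance : MulDistribMulAction (Abelianization G) (commutator G) :=
  .compHom _ (Abelianization.conjCommutator G)

def commutatorRep : Representation ℤ (Abelianization G) (Additive (commutator G)) :=
  Representation.ofMulDistribMulAction _ _

variable {G}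

def commutatorRep.toCommutator :
    Multiplicative (commutatorRep G).asModule ≃* commutator G :=
  AddEquiv.toMultiplicativeLeft (commutatorRep G).asModuleEquiv.toAddEquiv

theorem commutatorRep.toCommutator_of_smul (g : G) (m : (commutatorRep G).asModule) :
    (toCommutator (.ofAdd (MonoidAlgebra.of ℤ _ (Abelianization.of g) • m)) : G) =
      g * toCommutator (.ofAdd m) * g⁻¹ := by
  rw [← MulAut.conjNormal_apply]
  change (((commutatorRep G).asModuleEquiv (_ • m)).toMul : G) = _
  rw [Representation.asModuleEquiv_map_smul, Representation.asAlgebraHom_of]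
  rfl

theorem commutatorRep.of_smul_eq_self_iff (g : G) (m : (commutatorRep G).asModule) :
    MonoidAlgebra.of ℤ _ (Abelianization.of g) • m = m ↔ Commute g (toCommutator (.ofAdd m)) := by
  rw [Commute, SemiconjBy, ← mul_inv_eq_iff_eq_mul, ← toCommutator_of_smul, Subtype.coe_inj,
    EquivLike.apply_eq_iff_eq, EmbeddingLike.apply_eq_iff_eq]

instance [Group.FG G] :
    Module.Finite (MonoidAlgebra ℤ (Abelianization G)) (commutatorRep G).asModule := by
  obtain ⟨S, hS⟩ := Group.FG.out (G := G)
  let ψ := (commutator G).subtype.comp (commutatorRep.toCommutator (G := G)).toMonoidHom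
  have hψ : Function.Injective ψ :=
    Subtype.val_injective.comp commutatorRep.toCommutator.injective
  let gens := {m | ψ (.ofAdd m) ∈ Set.image2 (⁅·, ·⁆) (S : Set G) S}
  have hgens : gens.Finite := (S.finite_toSet.image2 _ S.finite_toSet).preimage
    (hψ.comp Multiplicative.ofAdd.injective).injOn
  let W := Submodule.span (MonoidAlgebra ℤ (Abelianization G)) gens
  let W' : Subgroup G := (AddSubgroup.toSubgroup W.toAddSubgroup).map ψ
  have : W'.Normal := ⟨by
    rintro _ ⟨m, hm, rfl⟩ g
    exact ⟨.ofAdd (MonoidAlgebra.of ℤ _ (Abelianization.of g) • m.toAdd), W.smul_mem _ hm,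
      commutatorRep.toCommutator_of_smul g _⟩⟩
  have hle : commutator G ≤ W' := commutator_le_of_commutatorElement_mem hS <| by
    intro s hs t ht
    refine ⟨commutatorRep.toCommutator.symm
      ⟨⁅s, t⁆, Subgroup.commutator_mem_commutator trivial trivial⟩,
      show Multiplicative.toAdd _ ∈ W from Submodule.subset_span ?_, by simp [ψ]⟩
    simpa [gens, ψ] using ⟨s, hs, t, ht, rfl⟩
  refine ⟨⟨hgens.toFinset, ?_⟩⟩
  rw [Set.Finite.coe_toFinset, Submodule.eq_top_iff']
  intro m
  obtain ⟨m', hm', hm'm⟩ := hle (commutatorRep.toCommutator (.ofAdd m)).2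
  obtain rfl : m' = .ofAdd m := hψ hm'm
  exact hm'

theorem exists_commute_pow_of_commute_pow [Group.FG G] :
    ∃ N : ℕ, 0 < N ∧ ∀ g : G, ∀ h ∈ commutator G, ∀ k : ℕ, 0 < k →
      Commute h (g ^ k) → Commute h (g ^ N) := by
  have : Group.FG (Abelianization G) := Group.fg_of_surjective (QuotientGroup.mk'_surjective _)
  have : IsNoetherianRing (MonoidAlgebra ℤ (Abelianization G)) :=
    Algebra.FiniteType.isNoetherianRing ℤ _
  obtain ⟨N, hN, hper⟩ := PeriodsDvd.exists_of_finite (MonoidAlgebra.of ℤ (Abelianization G))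
    (commutatorRep G).asModule
  refine ⟨N, hN, fun g h hh k hk hhk => ?_⟩
  let m := Multiplicative.toAdd (commutatorRep.toCommutator.symm ⟨h, hh⟩)
  have hm (n : ℕ) : MonoidAlgebra.of ℤ _ (Abelianization.of g) ^ n • m = m ↔ Commute h (g ^ n) := by
    rw [← map_pow, ← map_pow, commutatorRep.of_smul_eq_self_iff, Commute.symm_iff]
    simp [m]
  exact (hm N).1 (hper _ m k hk ((hm k).2 hhk))

end Metabelian

theorem metabelian_orbit_exponent_general (G : Type*) [Group G] (S : Finset G)
    (hgen : Subgroup.closure (S : Set G) = ⊤)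
    (hmeta : ∀ a ∈ commutator G, ∀ b ∈ commutator G, a * b = b * a) :
    ∃ N : ℕ, 1 ≤ N ∧ ∀ g : G, ∀ h ∈ commutator G,
      ⁅h, g ^ N⁆ ≠ 1 → ∀ k : ℤ, k ≠ 0 → ⁅h, g ^ k⁆ ≠ 1 := by
  have : IsMulCommutative (commutator G) := ⟨⟨fun a b => Subtype.ext (hmeta _ a.2 _ b.2)⟩⟩
  have : Group.FG G := ⟨⟨S, hgen⟩⟩
  obtain ⟨N, hN, hcomm⟩ := exists_commute_pow_of_commute_pow (G := G)
  refine ⟨N, hN, fun g h hh hhN k hk hhk => hhN ?_⟩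
  rw [commutatorElement_eq_one_iff_commute] at hhk ⊢
  obtain ⟨n, rfl | rfl⟩ := Int.eq_nat_or_neg k <;>
  · simp only [zpow_neg, zpow_natCast, Commute.inv_right_iff] at hhk
    exact hcomm g h hh n (by omega) hhk

/-- For a finitely generated metabelian group G there is an integer N ≥ 1 such that
for every g ∈ G and h ∈ G', if [h, g^N] ≠ 1 then [h, g^k] ≠ 1 for all nonzero
integers k. -/
theorem metabelian_orbit_exponent (G : Type*) [Group G] (d : ℕ) (S : Finset G)
    (hcard : S.card = d) (hgen : Subgroup.closure (S : Set G) = ⊤)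
    (hmeta : ∀ a ∈ commutator G, ∀ b ∈ commutator G, a * b = b * a) :
    ∃ N : ℕ, 1 ≤ N ∧ ∀ g : G, ∀ h ∈ commutator G,
      ⁅h, g ^ N⁆ ≠ 1 → ∀ k : ℤ, k ≠ 0 → ⁅h, g ^ k⁆ ≠ 1 :=
  metabelian_orbit_exponent_general G S hgen hmeta
end

section
/- If w is a weak identity of height N₁ in a group G₁ and a weak identity of height N₂ in a group G₂, then w is a weak identity of height N₁ + N₂ - 1 (in particular, of height N₁ + N₂) in the direct product G₁ × G₂. -/
/-- w is a weak identity of height N in G. -/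
def IsWeakIdentity (G : Type*) [Group G] (w : FreeGroup ℕ) (N : ℕ) : Prop :=
  ∀ ρ : (Fin N → FreeGroup ℕ) →* G, ∃ k : Fin N,
    ρ (MonoidHom.mulSingle (fun _ : Fin N => FreeGroup ℕ) k w) = 1

open Classical in
/-- Pull back a weak identity along an injection of index sets. -/
lemma weak_identity_pullback {G : Type*} [Group G] {w : FreeGroup ℕ} {m N : ℕ}
    (h : IsWeakIdentity G w m) (f : Fin m → Fin N) (hf : Function.Injective f)
    (ρ : (Fin N → FreeGroup ℕ) →* G) :
    ∃ k : Fin m, ρ (MonoidHom.mulSingle (fun _ : Fin N => FreeGroup ℕ) (f k) w) = 1 := by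
  let e : (Fin m → FreeGroup ℕ) →* (Fin N → FreeGroup ℕ) :=
  { toFun := fun g j => if h : ∃ i, f i = j then g h.choose else 1
    map_one' := by funext j; split <;> rfl
    map_mul' := fun g g' => by
      funext j; by_cases hj : ∃ i, f i = j <;> simp [hj] }
  obtain ⟨k, hk⟩ := h (ρ.comp e)
  refine ⟨k, ?_⟩
  have key : e (MonoidHom.mulSingle (fun _ : Fin m => FreeGroup ℕ) k w)
      = MonoidHom.mulSingle (fun _ : Fin N => FreeGroup ℕ) (f k) w := by
    funext j
    simp only [e, MonoidHom.coe_mk, OneHom.coe_mk, MonoidHom.mulSingle_apply]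
    symm
    split
    · rename_i hj
      have hc : f hj.choose = j := hj.choose_spec
      by_cases hjk : j = f k
      · have : hj.choose = k := hf (by rw [hc, hjk])
        rw [this, hjk]
        simp
      · have hne : hj.choose ≠ k := fun h' => hjk (by rw [← hc, h'])
        rw [Pi.mulSingle_eq_of_ne hne, Pi.mulSingle_eq_of_ne (Ne.symm (fun h' => hjk h'.symm))]
    · rename_i hj
      have : j ≠ f k := fun h' => hj ⟨k, h'.symm⟩
      rw [Pi.mulSingle_eq_of_ne this]
  rw [MonoidHom.comp_apply, key] at hk
  exact hk

/-- If w is a weak identity of height N₁ in G₁ and of height N₂ in G₂, then w is a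
weak identity of height N₁ + N₂ - 1 in G₁ × G₂. -/
theorem weak_identity_prod (G₁ G₂ : Type*) [Group G₁] [Group G₂]
    (w : FreeGroup ℕ) (N₁ N₂ : ℕ)
    (h₁ : IsWeakIdentity G₁ w N₁) (h₂ : IsWeakIdentity G₂ w N₂) :
    IsWeakIdentity (G₁ × G₂) w (N₁ + N₂ - 1) := by
  classical
  -- degenerate cases
  rcases Nat.eq_zero_or_pos N₁ with hN₁ | hN₁
  · subst hN₁; obtain ⟨k, _⟩ := h₁ 1; exact absurd k.2 (by omega)
  rcases Nat.eq_zero_or_pos N₂ with hN₂ | hN₂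
  · subst hN₂; obtain ⟨k, _⟩ := h₂ 1; exact absurd k.2 (by omega)
  set N := N₁ + N₂ - 1 with hN
  intro ρ
  let T₁ : Finset (Fin N) := Finset.univ.filter
    (fun k => (ρ (MonoidHom.mulSingle (fun _ : Fin N => FreeGroup ℕ) k w)).1 ≠ 1)
  let T₂ : Finset (Fin N) := Finset.univ.filter
    (fun k => (ρ (MonoidHom.mulSingle (fun _ : Fin N => FreeGroup ℕ) k w)).2 ≠ 1)
  have hT₁ : T₁.card < N₁ := by
    by_contra hc
    push_neg at hc
    obtain ⟨k, hk⟩ := weak_identity_pullback h₁ (T₁.orderEmbOfCardLe hc)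
      (T₁.orderEmbOfCardLe hc).injective ((MonoidHom.fst G₁ G₂).comp ρ)
    have hmem := T₁.orderEmbOfCardLe_mem hc k
    simp only [T₁, Finset.mem_filter] at hmem
    simp only [MonoidHom.comp_apply, MonoidHom.coe_fst] at hk
    exact hmem.2 hk
  have hT₂ : T₂.card < N₂ := by
    by_contra hc
    push_neg at hc
    obtain ⟨k, hk⟩ := weak_identity_pullback h₂ (T₂.orderEmbOfCardLe hc)
      (T₂.orderEmbOfCardLe hc).injective ((MonoidHom.snd G₁ G₂).comp ρ)
    have hmem := T₂.orderEmbOfCardLe_mem hc k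
    simp only [T₂, Finset.mem_filter] at hmem
    simp only [MonoidHom.comp_apply, MonoidHom.coe_snd] at hk
    exact hmem.2 hk
  have hcard : (T₁ ∪ T₂).card < N := by
    calc (T₁ ∪ T₂).card ≤ T₁.card + T₂.card := Finset.card_union_le _ _
    _ < N := by omega
  have : ∃ k : Fin N, k ∉ T₁ ∪ T₂ := by
    by_contra hc
    push_neg at hc
    have : (Finset.univ : Finset (Fin N)) ⊆ T₁ ∪ T₂ := fun x _ => hc x
    have := Finset.card_le_card this
    simp [Finset.card_univ] at this
    omega
  obtain ⟨k, hk⟩ := this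
  simp only [Finset.mem_union, T₁, T₂, Finset.mem_filter, Finset.mem_univ, true_and,
    not_or, not_not] at hk
  exact ⟨k, Prod.ext hk.1 hk.2⟩
end
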